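/- Let G and G' be Gauss diagrams such that G' is obtained from G by a finite sequence of crossing changes. Then for every nonzero integer k, J_k(G) − J_{−k}(G) = J_k(G') − J_{−k}(G'); in other words, the (anti-)reciprocal part of the writhe polynomial is invariant under crossing changes. -/

import Mathlib

open scoped Classical

/-- A Gauss diagram with `n` chords: the `2n` marked points live on the cyclic group
`ZMod (2*n)` (the oriented circle); each chord `i` is the ordered pair
`(tail i, head i)` of marked points and carries a sign (writhe) `sign i ∈ {+1, -1}`;
all `2n` endpoints are distinct. -/
structure GaussDiagram (n : ℕ) where
  tail : Fin n → ZMod (2 * n)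
  head : Fin n → ZMod (2 * n)
  sign : Fin n → ℤ
  sign_mem : ∀ i, sign i = 1 ∨ sign i = -1
  endpoints_inj : Function.Injective
    (fun p : Fin n × Bool => if p.2 then head p.1 else tail p.1)

namespace GaussDiagram

variable {n : ℕ}

/-- `x` lies on the open arc running in the circle's orientation from `a` to `b`. -/
def arcMem (a b x : ZMod (2 * n)) : Prop :=
  0 < (x - a).val ∧ (x - a).val < (b - a).val

/-- `x` lies on the open oriented arc from the tail to the head of chord `i`. -/
def inArc (G : GaussDiagram n) (i : Fin n) (x : ZMod (2 * n)) : Prop :=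
  arcMem (G.tail i) (G.head i) x

/-- Chords `i` and `j` are linked: exactly one endpoint of `j` lies on the open
oriented arc from the tail to the head of `i`. -/
def linked (G : GaussDiagram n) (i j : Fin n) : Prop :=
  Xor' (G.inArc i (G.tail j)) (G.inArc i (G.head j))

/-- Chord `j` crosses chord `i` from right to left. -/
def crossesRL (G : GaussDiagram n) (i j : Fin n) : Prop :=
  G.linked i j ∧ G.inArc i (G.head j)

/-- Chord `j` crosses chord `i` from left to right. -/
def crossesLR (G : GaussDiagram n) (i j : Fin n) : Prop :=
  G.linked i j ∧ G.inArc i (G.tail j)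

/-- The index of the chord `i`: `Ind(i) = r₊ − r₋ − l₊ + l₋`. -/
noncomputable def ind (G : GaussDiagram n) (i : Fin n) : ℤ :=
  ((Finset.univ.filter fun j => G.crossesRL i j ∧ G.sign j = 1).card : ℤ)
    - ((Finset.univ.filter fun j => G.crossesRL i j ∧ G.sign j = -1).card : ℤ)
    - ((Finset.univ.filter fun j => G.crossesLR i j ∧ G.sign j = 1).card : ℤ)
    + ((Finset.univ.filter fun j => G.crossesLR i j ∧ G.sign j = -1).card : ℤ)

/-- The `k`-th writhe `J_k(G)`: the number of positive chords of index `k` minus the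
number of negative chords of index `k`. -/
noncomputable def J (G : GaussDiagram n) (k : ℤ) : ℤ :=
  ((Finset.univ.filter fun i => G.ind i = k ∧ G.sign i = 1).card : ℤ)
    - ((Finset.univ.filter fun i => G.ind i = k ∧ G.sign i = -1).card : ℤ)

/-- The writhe polynomial `W_G(t) = ∑_{Ind(c) ≠ 0} w(c) t^{Ind(c)} = ∑_{k ≠ 0} J_k(G) t^k`. -/
noncomputable def writhePoly (G : GaussDiagram n) : LaurentPolynomial ℤ :=
  ∑ i ∈ Finset.univ.filter (fun i => G.ind i ≠ 0),
    LaurentPolynomial.C (G.sign i) * LaurentPolynomial.T (G.ind i)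

/-- The odd writhe `J(G) = ∑_{c ∈ Odd(G)} w(c)`. -/
noncomputable def oddWrithe (G : GaussDiagram n) : ℤ :=
  ∑ i ∈ Finset.univ.filter (fun i => Odd (G.ind i)), G.sign i

/-- `G'` is obtained from `G` by a crossing change at the chord `c`: the tail and head
of `c` are interchanged and its sign is negated, all other chords being unchanged. -/
def IsCrossingChangeAt (G G' : GaussDiagram n) (c : Fin n) : Prop :=
  G'.tail c = G.head c ∧ G'.head c = G.tail c ∧ G'.sign c = -G.sign c ∧
    ∀ j : Fin n, j ≠ c →
      G'.tail j = G.tail j ∧ G'.head j = G.head j ∧ G'.sign j = G.sign j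

/-- `G'` is obtained from `G` by a crossing change (at some chord). -/
def IsCrossingChange (G G' : GaussDiagram n) : Prop :=
  ∃ c, IsCrossingChangeAt G G' c

/-- `G'` is obtained from `G` by a sequence of `m` crossing changes. -/
def ChangedBy (m : ℕ) (G G' : GaussDiagram n) : Prop :=
  ∃ f : ℕ → GaussDiagram n, f 0 = G ∧ f m = G' ∧
    ∀ i < m, IsCrossingChange (f i) (f (i + 1))

end GaussDiagram

/-!
A crossing change at `c` reverses the chord `c`. For any other chord `j`, the chord `c` now
crosses `j` in the opposite direction but with the opposite sign, so `Ind(j)` is unchanged. For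
`c` itself, the arc from head to tail is the complement of the arc from tail to head, so every
chord crossing `c` switches direction and `Ind(c)` changes sign. Hence the only term of
`J_k − J_{−k} = ∑ w(i) ([Ind i = k] − [Ind i = −k])` that can change is the one at `c`, and it is
invariant under `(w, Ind) ↦ (−w, −Ind)`.
-/

theorem ZMod.val_sub_lt_val_neg_iff {N : ℕ} [NeZero N] {u v : ZMod N} (hv : v ≠ 0) :
    (u - v).val < (-v).val ↔ v.val ≤ u.val := by
  have hv0 : v.val ≠ 0 := (ZMod.val_ne_zero v).mpr hv
  rw [ZMod.neg_val, if_neg hv]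
  rcases le_or_gt v.val u.val with hvu | huv
  · rw [ZMod.val_sub hvu]
    have := u.val_lt
    omega
  · have hvu : v - u ≠ 0 := sub_ne_zero.mpr fun h => (h ▸ huv).false
    rw [← neg_sub, ZMod.neg_val, if_neg hvu, ZMod.val_sub huv.le]
    have := v.val_lt
    omega

namespace GaussDiagram

variable {n : ℕ}

theorem arcMem_swap_iff [NeZero n] {a b x : ZMod (2 * n)} (hab : a ≠ b) (hxa : x ≠ a)
    (hxb : x ≠ b) : arcMem b a x ↔ ¬ arcMem a b x := by
  have hba : b - a ≠ 0 := sub_ne_zero.mpr hab.symm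
  have hxa' : 0 < (x - a).val := (ZMod.val_pos).mpr (sub_ne_zero.mpr hxa)
  have hxb' : 0 < (x - b).val := (ZMod.val_pos).mpr (sub_ne_zero.mpr hxb)
  have key := ZMod.val_sub_lt_val_neg_iff (u := x - a) hba
  rw [sub_sub_sub_cancel_right, neg_sub] at key
  simp only [arcMem, key, hxa', hxb', true_and, not_lt]

theorem tail_ne_head (G : GaussDiagram n) (i j : Fin n) : G.tail i ≠ G.head j := fun h =>
  absurd (G.endpoints_inj (a₁ := (i, false)) (a₂ := (j, true)) (by simpa using h)) (by simp)

theorem tail_ne_tail (G : GaussDiagram n) {i j : Fin n} (hij : i ≠ j) : G.tail i ≠ G.tail j :=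
  fun h => hij congr($(G.endpoints_inj (a₁ := (i, false)) (a₂ := (j, false)) (by simpa using h)).1)

theorem head_ne_head (G : GaussDiagram n) {i j : Fin n} (hij : i ≠ j) : G.head i ≠ G.head j :=
  fun h => hij congr($(G.endpoints_inj (a₁ := (i, true)) (a₂ := (j, true)) (by simpa using h)).1)

theorem not_inArc_tail (G : GaussDiagram n) (i : Fin n) : ¬ G.inArc i (G.tail i) := by
  simp [inArc, arcMem]

theorem not_inArc_head (G : GaussDiagram n) (i : Fin n) : ¬ G.inArc i (G.head i) :=
  fun h => h.2.false

theorem crossesRL_iff (G : GaussDiagram n) (i j : Fin n) :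
    G.crossesRL i j ↔ ¬ G.inArc i (G.tail j) ∧ G.inArc i (G.head j) := by
  change Xor _ _ ∧ _ ↔ _
  rw [xor_def]
  tauto

theorem crossesLR_iff (G : GaussDiagram n) (i j : Fin n) :
    G.crossesLR i j ↔ G.inArc i (G.tail j) ∧ ¬ G.inArc i (G.head j) := by
  change Xor _ _ ∧ _ ↔ _
  rw [xor_def]
  tauto

theorem ind_eq_sum (G : GaussDiagram n) (i : Fin n) :
    G.ind i = ∑ j, G.sign j *
      ((if G.crossesRL i j then 1 else 0) - (if G.crossesLR i j then 1 else 0)) := by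
  simp only [ind, Finset.card_filter, Nat.cast_sum, Nat.cast_ite, Nat.cast_one, Nat.cast_zero,
    ← Finset.sum_sub_distrib, ← Finset.sum_add_distrib]
  refine Finset.sum_congr rfl fun j _ => ?_
  rcases G.sign_mem j with h | h <;> by_cases hRL : G.crossesRL i j <;>
    by_cases hLR : G.crossesLR i j <;> simp [h, hRL, hLR]

theorem J_eq_sum (G : GaussDiagram n) (k : ℤ) :
    G.J k = ∑ i, G.sign i * if G.ind i = k then 1 else 0 := by
  simp only [J, Finset.card_filter, Nat.cast_sum, Nat.cast_ite, Nat.cast_one, Nat.cast_zero,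
    ← Finset.sum_sub_distrib]
  refine Finset.sum_congr rfl fun i _ => ?_
  rcases G.sign_mem i with h | h <;> by_cases hk : G.ind i = k <;> simp [h, hk]

namespace IsCrossingChangeAt

variable {G G' : GaussDiagram n} {c : Fin n}

theorem inArc_iff_of_ne (h : IsCrossingChangeAt G G' c) {j : Fin n} (hj : j ≠ c)
    (x : ZMod (2 * n)) : G'.inArc j x ↔ G.inArc j x := by
  rw [inArc, inArc, (h.2.2.2 j hj).1, (h.2.2.2 j hj).2.1]

theorem inArc_self_iff (h : IsCrossingChangeAt G G' c) {x : ZMod (2 * n)}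
    (hxt : x ≠ G.tail c) (hxh : x ≠ G.head c) : G'.inArc c x ↔ ¬ G.inArc c x := by
  have : NeZero n := ⟨c.pos.ne'⟩
  rw [inArc, inArc, h.1, h.2.1]
  exact arcMem_swap_iff (G.tail_ne_head c c) hxt hxh

theorem ind_of_ne (h : IsCrossingChangeAt G G' c) {j : Fin n} (hj : j ≠ c) :
    G'.ind j = G.ind j := by
  rw [ind_eq_sum, ind_eq_sum]
  refine Finset.sum_congr rfl fun d _ => ?_
  simp only [crossesRL_iff, crossesLR_iff, h.inArc_iff_of_ne hj]
  by_cases hd : d = c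
  · subst hd
    simp only [h.1, h.2.1, h.2.2.1, and_comm]
    ring
  · rw [(h.2.2.2 d hd).1, (h.2.2.2 d hd).2.1, (h.2.2.2 d hd).2.2]

theorem ind_self (h : IsCrossingChangeAt G G' c) : G'.ind c = -G.ind c := by
  rw [ind_eq_sum, ind_eq_sum, ← Finset.sum_neg_distrib]
  refine Finset.sum_congr rfl fun d _ => ?_
  by_cases hd : d = c
  · subst hd
    simp [crossesRL_iff, crossesLR_iff, not_inArc_tail, not_inArc_head]
  · obtain ⟨htail, hhead, hsign⟩ := h.2.2.2 d hd
    have hT := h.inArc_self_iff (G.tail_ne_tail hd) (G.tail_ne_head d c)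
    have hH := h.inArc_self_iff (G.tail_ne_head c d).symm (G.head_ne_head hd)
    simp only [crossesRL_iff, crossesLR_iff, htail, hhead, hsign, hT, hH, not_not]
    ring

theorem J_sub_J_neg_eq (h : IsCrossingChangeAt G G' c) (k : ℤ) :
    G'.J k - G'.J (-k) = G.J k - G.J (-k) := by
  simp only [J_eq_sum, ← Finset.sum_sub_distrib]
  refine Finset.sum_congr rfl fun i _ => ?_
  by_cases hi : i = c
  · subst hi
    simp only [h.2.2.1, h.ind_self, neg_eq_iff_eq_neg, neg_neg]
    ring
  · rw [h.ind_of_ne hi, (h.2.2.2 i hi).2.2]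

end IsCrossingChangeAt

theorem ChangedBy.apply_eq {α : Type*} {φ : GaussDiagram n → α}
    (hφ : ∀ G G', IsCrossingChange G G' → φ G = φ G') {m : ℕ} {G G' : GaussDiagram n}
    (h : ChangedBy m G G') : φ G = φ G' := by
  obtain ⟨f, rfl, rfl, hf⟩ := h
  suffices ∀ i ≤ m, φ (f 0) = φ (f i) from this m le_rfl
  intro i hi
  induction i with
  | zero => rfl
  | succ i ih => exact (ih (by omega)).trans (hφ _ _ (hf i (by omega)))

end GaussDiagram

/-- the quantity `J_k − J_{−k}` is invariant under any finite sequence of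
crossing changes, for every nonzero integer `k`. -/
theorem J_sub_J_neg_invariant {n : ℕ} (G G' : GaussDiagram n)
    (h : ∃ m : ℕ, GaussDiagram.ChangedBy m G G') :
    ∀ k : ℤ, k ≠ 0 → G.J k - G.J (-k) = G'.J k - G'.J (-k) := by
  intro k _
  obtain ⟨m, hm⟩ := h
  exact hm.apply_eq (φ := fun G => G.J k - G.J (-k))
    fun _ _ ⟨_, hc⟩ => (hc.J_sub_J_neg_eq k).symm
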